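/- Let θ be a C^2 vector field on R^3 and A a C^2 vector field on an open set Ω ⊂ R^3 with div A = 0 on Ω. Then div((div θ · I − ∇θ − (∇θ)^t) A) = − div((θ·∇)A + (∇θ)^t A) on Ω. -/

import Mathlib

open Matrix

noncomputable def pd (i : Fin 3) (g : (Fin 3 → ℝ) → ℝ) (x : Fin 3 → ℝ) : ℝ :=
  fderiv ℝ g x (Pi.single i 1)

noncomputable def grad (f : (Fin 3 → ℝ) → ℝ) (x : Fin 3 → ℝ) : Fin 3 → ℝ :=
  fun i => pd i f x

noncomputable def vdiv (v : (Fin 3 → ℝ) → (Fin 3 → ℝ)) (x : Fin 3 → ℝ) : ℝ :=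
  ∑ i, pd i (fun y => v y i) x

noncomputable def curl (v : (Fin 3 → ℝ) → (Fin 3 → ℝ)) (x : Fin 3 → ℝ) : Fin 3 → ℝ :=
  ![pd 1 (fun y => v y 2) x - pd 2 (fun y => v y 1) x,
    pd 2 (fun y => v y 0) x - pd 0 (fun y => v y 2) x,
    pd 0 (fun y => v y 1) x - pd 1 (fun y => v y 0) x]

/-- Jacobian matrix `(∂v_i/∂x_j)_{i,j}`. -/
noncomputable def jac (v : (Fin 3 → ℝ) → (Fin 3 → ℝ)) (x : Fin 3 → ℝ) :
    Matrix (Fin 3) (Fin 3) ℝ :=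
  Matrix.of fun i j => pd j (fun y => v y i) x

/-- `(u·∇)v`, the vector with components `Σ_j u_j ∂v_i/∂x_j`. -/
noncomputable def dirDeriv (u v : (Fin 3 → ℝ) → (Fin 3 → ℝ)) (x : Fin 3 → ℝ) :
    Fin 3 → ℝ :=
  fun i => ∑ j, u x j * pd j (fun y => v y i) x

section Helpers

variable {x : Fin 3 → ℝ} {g h : (Fin 3 → ℝ) → ℝ} {i : Fin 3}

lemma pd_add (hg : DifferentiableAt ℝ g x) (hh : DifferentiableAt ℝ h x) :
    pd i (fun y => g y + h y) x = pd i g x + pd i h x := by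
  simp [pd, fderiv_fun_add hg hh]

lemma pd_sub (hg : DifferentiableAt ℝ g x) (hh : DifferentiableAt ℝ h x) :
    pd i (fun y => g y - h y) x = pd i g x - pd i h x := by
  simp [pd, fderiv_fun_sub hg hh]

lemma pd_mul (hg : DifferentiableAt ℝ g x) (hh : DifferentiableAt ℝ h x) :
    pd i (fun y => g y * h y) x = g x * pd i h x + h x * pd i g x := by
  simp [pd, fderiv_fun_mul hg hh]

lemma pd_sum {s : Finset (Fin 3)} {f : Fin 3 → (Fin 3 → ℝ) → ℝ}
    (hf : ∀ j ∈ s, DifferentiableAt ℝ (f j) x) :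
    pd i (fun y => ∑ j ∈ s, f j y) x = ∑ j ∈ s, pd i (f j) x := by
  simp [pd, fderiv_fun_sum hf]

lemma pd_eventually_zero (hg : g =ᶠ[nhds x] fun _ => 0) : pd i g x = 0 := by
  have : fderiv ℝ g x = fderiv ℝ (fun _ : Fin 3 → ℝ => (0 : ℝ)) x := hg.fderiv_eq
  simp [pd, this]

lemma diffAt_pd (hg : ContDiffAt ℝ 2 g x) (j : Fin 3) :
    DifferentiableAt ℝ (fun y => pd j g y) x := by
  have h1 : ContDiffAt ℝ 1 (fderiv ℝ g) x := hg.fderiv_right (by norm_num)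
  have h2 : ContDiffAt ℝ 1 (fun y => fderiv ℝ g y (Pi.single j 1)) x :=
    h1.clm_apply contDiffAt_const
  exact h2.differentiableAt (by norm_num)

lemma pd_swap (hg : ContDiffAt ℝ 2 g x) (i j : Fin 3) :
    pd i (fun y => pd j g y) x = pd j (fun y => pd i g y) x := by
  have hd : DifferentiableAt ℝ (fderiv ℝ g) x :=
    (hg.fderiv_right (m := 1) (by norm_num)).differentiableAt (by norm_num)
  have key : ∀ v w : Fin 3 → ℝ,
      fderiv ℝ (fun y => fderiv ℝ g y w) x v = fderiv ℝ (fderiv ℝ g) x v w := by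
    intro v w
    rw [fderiv_clm_apply hd (differentiableAt_const w)]
    simp
  have hsym := hg.isSymmSndFDerivAt (by simp [minSmoothness_of_isRCLikeNormedField])
  simp only [pd]
  rw [key, key, hsym]

end Helpers

/-- If `div A = 0` on `Ω`, then
`div((div θ · I − ∇θ − (∇θ)ᵗ) A) = − div((θ·∇)A + (∇θ)ᵗ A)` on `Ω`. -/
theorem div_identity_for_divergence_free_fields
    (θ A : (Fin 3 → ℝ) → (Fin 3 → ℝ)) (Ω : Set (Fin 3 → ℝ)) (hΩ : IsOpen Ω)
    (hθ : ContDiff ℝ 2 θ) (hA : ContDiffOn ℝ 2 A Ω)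
    (hdivA : ∀ x ∈ Ω, vdiv A x = 0) :
    ∀ x ∈ Ω,
      vdiv (fun y => (vdiv θ y • (1 : Matrix (Fin 3) (Fin 3) ℝ)
          - jac θ y - (jac θ y)ᵀ).mulVec (A y)) x
        = - vdiv (fun y => dirDeriv θ A y + (jac θ y)ᵀ.mulVec (A y)) x := by
  intro x hx
  have hxΩ : Ω ∈ nhds x := hΩ.mem_nhds hx
  -- basic regularity at x
  have hθAt : ∀ i, ContDiffAt ℝ 2 (fun y => θ y i) x :=
    fun i => (contDiff_pi.mp hθ i).contDiffAt
  have hAAt : ∀ i, ContDiffAt ℝ 2 (fun y => A y i) x :=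
    fun i => (contDiffOn_pi.mp hA i).contDiffAt hxΩ
  have dθ : ∀ i, DifferentiableAt ℝ (fun y => θ y i) x :=
    fun i => (hθAt i).differentiableAt (by norm_num)
  have dA : ∀ i, DifferentiableAt ℝ (fun y => A y i) x :=
    fun i => (hAAt i).differentiableAt (by norm_num)
  have dpdθ : ∀ j i, DifferentiableAt ℝ (fun y => pd j (fun z => θ z i) y) x :=
    fun j i => diffAt_pd (hθAt i) j
  have dpdA : ∀ j i, DifferentiableAt ℝ (fun y => pd j (fun z => A z i) y) x :=
    fun j i => diffAt_pd (hAAt i) j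
  have ddivθ : DifferentiableAt ℝ (fun y => vdiv θ y) x := by
    have : DifferentiableAt ℝ
        (fun y => ∑ j, pd j (fun z => θ z j) y) x :=
      DifferentiableAt.fun_sum fun j _ => dpdθ j j
    simpa [vdiv] using this
  -- derivative of div A vanishes near x
  have hdA0 : ∀ j, pd j (fun y => vdiv A y) x = 0 := by
    intro j
    apply pd_eventually_zero
    filter_upwards [hxΩ] with y hy using hdivA y hy
  -- component formulas
  have hLi : ∀ i : Fin 3,
      pd i (fun y => (vdiv θ y • (1 : Matrix (Fin 3) (Fin 3) ℝ)
          - jac θ y - (jac θ y)ᵀ).mulVec (A y) i) x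
      = (vdiv θ x * pd i (fun z => A z i) x
          + A x i * (∑ j, pd i (fun y => pd j (fun z => θ z j) y) x))
        - (∑ j, (pd j (fun z => θ z i) x * pd i (fun z => A z j) x
            + A x j * pd i (fun y => pd j (fun z => θ z i) y) x))
        - (∑ j, (pd i (fun z => θ z j) x * pd i (fun z => A z j) x
            + A x j * pd i (fun y => pd i (fun z => θ z j) y) x)) := by
    intro i
    have hfun : (fun y => (vdiv θ y • (1 : Matrix (Fin 3) (Fin 3) ℝ)
          - jac θ y - (jac θ y)ᵀ).mulVec (A y) i)
        = fun y => vdiv θ y * A y i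
            - (∑ j, pd j (fun z => θ z i) y * A y j)
            - (∑ j, pd i (fun z => θ z j) y * A y j) := by
      funext y
      have hms : (vdiv θ y • (1 : Matrix (Fin 3) (Fin 3) ℝ)
          - jac θ y - (jac θ y)ᵀ).mulVec (A y)
          = vdiv θ y • A y - (jac θ y).mulVec (A y) - ((jac θ y)ᵀ).mulVec (A y) := by
        rw [Matrix.sub_mulVec, Matrix.sub_mulVec, Matrix.smul_mulVec,
          Matrix.one_mulVec]
      rw [hms]
      simp [Matrix.mulVec, dotProduct, jac, Matrix.transpose_apply, smul_eq_mul]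
    rw [hfun]
    have d1 : DifferentiableAt ℝ (fun y => vdiv θ y * A y i) x := ddivθ.mul (dA i)
    have d2 : DifferentiableAt ℝ (fun y => ∑ j, pd j (fun z => θ z i) y * A y j) x :=
      DifferentiableAt.fun_sum fun j _ => (dpdθ j i).fun_mul (dA j)
    have d3 : DifferentiableAt ℝ (fun y => ∑ j, pd i (fun z => θ z j) y * A y j) x :=
      DifferentiableAt.fun_sum fun j _ => (dpdθ i j).fun_mul (dA j)
    rw [pd_sub (d1.fun_sub d2) d3, pd_sub d1 d2, pd_mul ddivθ (dA i),
      pd_sum (fun j _ => (dpdθ j i).fun_mul (dA j)),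
      pd_sum (fun j _ => (dpdθ i j).fun_mul (dA j))]
    have hdivθ : pd i (fun y => vdiv θ y) x
        = ∑ j, pd i (fun y => pd j (fun z => θ z j) y) x := by
      have : pd i (fun y => ∑ j, pd j (fun z => θ z j) y) x
          = ∑ j, pd i (fun y => pd j (fun z => θ z j) y) x :=
        pd_sum (fun j _ => dpdθ j j)
      simpa [vdiv] using this
    rw [hdivθ]
    congr 1
    · congr 1
      exact Finset.sum_congr rfl fun j _ => pd_mul (dpdθ j i) (dA j)
    · exact Finset.sum_congr rfl fun j _ => pd_mul (dpdθ i j) (dA j)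
  have hRi : ∀ i : Fin 3,
      pd i (fun y => (dirDeriv θ A y + (jac θ y)ᵀ.mulVec (A y)) i) x
      = (∑ j, (θ x j * pd i (fun y => pd j (fun z => A z i) y) x
          + pd j (fun z => A z i) x * pd i (fun z => θ z j) x))
        + (∑ j, (pd i (fun z => θ z j) x * pd i (fun z => A z j) x
            + A x j * pd i (fun y => pd i (fun z => θ z j) y) x)) := by
    intro i
    have hfun : (fun y => (dirDeriv θ A y + (jac θ y)ᵀ.mulVec (A y)) i)
        = fun y => (∑ j, θ y j * pd j (fun z => A z i) y)
            + (∑ j, pd i (fun z => θ z j) y * A y j) := by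
      funext y
      simp [dirDeriv, Matrix.mulVec, dotProduct, jac, Matrix.transpose_apply]
    rw [hfun]
    have d1 : DifferentiableAt ℝ (fun y => ∑ j, θ y j * pd j (fun z => A z i) y) x :=
      DifferentiableAt.fun_sum fun j _ => (dθ j).fun_mul (dpdA j i)
    have d2 : DifferentiableAt ℝ (fun y => ∑ j, pd i (fun z => θ z j) y * A y j) x :=
      DifferentiableAt.fun_sum fun j _ => (dpdθ i j).fun_mul (dA j)
    rw [pd_add d1 d2, pd_sum (fun j _ => (dθ j).fun_mul (dpdA j i)),
      pd_sum (fun j _ => (dpdθ i j).fun_mul (dA j))]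
    congr 1
    · exact Finset.sum_congr rfl fun j _ => pd_mul (dθ j) (dpdA j i)
    · exact Finset.sum_congr rfl fun j _ => pd_mul (dpdθ i j) (dA j)
  -- put everything together
  have hL : vdiv (fun y => (vdiv θ y • (1 : Matrix (Fin 3) (Fin 3) ℝ)
          - jac θ y - (jac θ y)ᵀ).mulVec (A y)) x
      = ∑ i : Fin 3, ((vdiv θ x * pd i (fun z => A z i) x
          + A x i * (∑ j, pd i (fun y => pd j (fun z => θ z j) y) x))
        - (∑ j, (pd j (fun z => θ z i) x * pd i (fun z => A z j) x
            + A x j * pd i (fun y => pd j (fun z => θ z i) y) x))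
        - (∑ j, (pd i (fun z => θ z j) x * pd i (fun z => A z j) x
            + A x j * pd i (fun y => pd i (fun z => θ z j) y) x))) := by
    unfold vdiv
    exact Finset.sum_congr rfl fun i _ => hLi i
  have hR : vdiv (fun y => dirDeriv θ A y + (jac θ y)ᵀ.mulVec (A y)) x
      = ∑ i : Fin 3, ((∑ j, (θ x j * pd i (fun y => pd j (fun z => A z i) y) x
          + pd j (fun z => A z i) x * pd i (fun z => θ z j) x))
        + (∑ j, (pd i (fun z => θ z j) x * pd i (fun z => A z j) x
            + A x j * pd i (fun y => pd i (fun z => θ z j) y) x))) := by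
    unfold vdiv
    exact Finset.sum_congr rfl fun i _ => hRi i
  rw [hL, hR]
  -- key cancellation identities
  have E0 : ∑ i : Fin 3, vdiv θ x * pd i (fun z => A z i) x = 0 := by
    rw [← Finset.mul_sum]
    have : (∑ i : Fin 3, pd i (fun z => A z i) x) = vdiv A x := rfl
    rw [this, hdivA x hx, mul_zero]
  have E1 : ∑ i : Fin 3, ∑ j : Fin 3,
      A x j * pd i (fun y => pd j (fun z => θ z i) y) x
      = ∑ i : Fin 3, A x i * (∑ j, pd i (fun y => pd j (fun z => θ z j) y) x) := by
    rw [Finset.sum_comm]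
    refine Finset.sum_congr rfl fun i _ => ?_
    rw [Finset.mul_sum]
    refine Finset.sum_congr rfl fun j _ => ?_
    rw [pd_swap (hθAt j) j i]
  have E2 : ∑ i : Fin 3, ∑ j : Fin 3,
      pd j (fun z => θ z i) x * pd i (fun z => A z j) x
      = ∑ i : Fin 3, ∑ j : Fin 3,
        pd j (fun z => A z i) x * pd i (fun z => θ z j) x := by
    rw [Finset.sum_comm]
    exact Finset.sum_congr rfl fun i _ => Finset.sum_congr rfl fun j _ => mul_comm _ _
  have E3 : ∑ i : Fin 3, ∑ j : Fin 3,
      θ x j * pd i (fun y => pd j (fun z => A z i) y) x = 0 := by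
    rw [Finset.sum_comm]
    refine Finset.sum_eq_zero fun j _ => ?_
    rw [← Finset.mul_sum]
    have h1 : ∑ i : Fin 3, pd i (fun y => pd j (fun z => A z i) y) x
        = ∑ i : Fin 3, pd j (fun y => pd i (fun z => A z i) y) x :=
      Finset.sum_congr rfl fun i _ => pd_swap (hAAt i) i j
    rw [h1]
    have h2 : ∑ i : Fin 3, pd j (fun y => pd i (fun z => A z i) y) x
        = pd j (fun y => vdiv A y) x := by
      simp only [vdiv]
      exact (pd_sum (fun i _ => dpdA i i)).symm
    rw [h2, hdA0 j, mul_zero]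
  -- finish with linear algebra on sums
  simp only [Finset.sum_add_distrib, Finset.sum_sub_distrib]
  linarith [E0, E1, E2, E3]
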